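/- arXiv:1210.5685 — 3 statements merged into one kernel-verified Lean document; each statement's English description precedes it below -/
import Mathlib

section
/- ξ(θ) tends to 0 as θ tends to π/2 from the left, and ξ(θ) tends to 0 as θ tends to −π/2 from the right; consequently, the extension of ξ to [−π/2, π/2] obtained by setting ξ(π/2) = ξ(−π/2) = 0 is continuous on the closed interval [−π/2, π/2]. -/
open Real Set Filter Topology

/-- The test function ξ(θ) = (cos²θ + 2θ·sinθ·cosθ + θ² − π²/4)/cos²θ. -/
noncomputable def xi (θ : ℝ) : ℝ :=
  (Real.cos θ ^ 2 + 2 * θ * Real.sin θ * Real.cos θ + θ ^ 2 - Real.pi ^ 2 / 4) /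
    Real.cos θ ^ 2

/-!
Both the numerator and the denominator `cos²θ` of ξ vanish at `θ = π/2`. The numerator has
derivative `4θ cos²θ` and the denominator `-2 sinθ cosθ`, whose ratio `-2θ cosθ / sinθ` tends
to `0`, so l'Hôpital's rule gives `ξ θ → 0` as `θ → π/2⁻`. Since ξ is even, the same holds at
`-π/2`. Because `x / 0 = 0` in Lean, `ξ (±π/2) = 0` already, so the extension is ξ itself.
-/

theorem continuousOn_Icc_of_continuousOn_Ioo {α β : Type*} [LinearOrder α] [TopologicalSpace α]
    [OrderTopology α] [TopologicalSpace β] {f : α → β} {a b : α}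
    (hf : ContinuousOn f (Ioo a b)) (ha : Tendsto f (𝓝[>] a) (𝓝 (f a)))
    (hb : Tendsto f (𝓝[<] b) (𝓝 (f b))) : ContinuousOn f (Icc a b) := by
  intro x hx
  rcases eq_endpoints_or_mem_Ioo_of_mem_Icc hx with rfl | rfl | hx
  · exact (continuousWithinAt_Ioi_iff_Ici.mp ha).mono Icc_subset_Ici_self
  · exact (continuousWithinAt_Iio_iff_Iic.mp hb).mono Icc_subset_Iic_self
  · exact (hf.continuousAt (isOpen_Ioo.mem_nhds hx)).continuousWithinAt

noncomputable def xiNumerator (θ : ℝ) : ℝ :=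
  cos θ ^ 2 + 2 * θ * sin θ * cos θ + θ ^ 2 - π ^ 2 / 4

lemma xiNumerator_pi_div_two : xiNumerator (π / 2) = 0 := by
  simp only [xiNumerator, cos_pi_div_two]
  ring

lemma hasDerivAt_xiNumerator (x : ℝ) : HasDerivAt xiNumerator (4 * x * cos x ^ 2) x := by
  have h := ((((hasDerivAt_cos x).pow 2).add ((((hasDerivAt_id' x).const_mul 2).mul
    (hasDerivAt_sin x)).mul (hasDerivAt_cos x))).add (hasDerivAt_pow 2 x)).sub_const (π ^ 2 / 4)
  refine h.congr_deriv ?_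
  simp only [Pi.mul_apply]
  linear_combination -2 * x * sin_sq_add_cos_sq x

lemma hasDerivAt_cos_sq (x : ℝ) :
    HasDerivAt (fun θ => cos θ ^ 2) (-(2 * sin x * cos x)) x := by
  refine ((hasDerivAt_cos x).pow 2).congr_deriv ?_
  ring

lemma continuous_xiNumerator : Continuous xiNumerator := by
  unfold xiNumerator
  fun_prop

lemma xi_neg (θ : ℝ) : xi (-θ) = xi θ := by
  simp only [xi, cos_neg, sin_neg, neg_sq]
  ring

lemma xi_pi_div_two : xi (π / 2) = 0 := by
  simp [xi, cos_pi_div_two]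

lemma tendsto_xi_nhdsLT_pi_div_two : Tendsto xi (𝓝[<] (π / 2)) (𝓝 0) := by
  have hpi : (0 : ℝ) < π / 2 := by positivity
  have hsin : ∀ x ∈ Ioo 0 (π / 2), 0 < sin x := fun x hx =>
    sin_pos_of_pos_of_lt_pi hx.1 (by linarith [pi_pos, hx.2])
  have hcos : ∀ x ∈ Ioo 0 (π / 2), 0 < cos x := fun x hx =>
    cos_pos_of_mem_Ioo ⟨by linarith [pi_pos, hx.1], hx.2⟩
  have hratio : Tendsto (fun x => 4 * x * cos x ^ 2 / -(2 * sin x * cos x))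
      (𝓝[<] (π / 2)) (𝓝 0) := by
    have hcont : ContinuousAt (fun x => -(2 * x) * cos x / sin x) (π / 2) :=
      ContinuousAt.div (by fun_prop) (by fun_prop) (by simp)
    have hlim := hcont.tendsto.mono_left (nhdsWithin_le_nhds (s := Iio (π / 2)))
    simp only [cos_pi_div_two, mul_zero, zero_div] at hlim
    refine hlim.congr' ?_
    filter_upwards [Ioo_mem_nhdsLT hpi] with x hx
    have := (hsin x hx).ne'
    have := (hcos x hx).ne'
    field_simp
    ring
  exact HasDerivAt.lhopital_zero_left_on_Ioc hpi
    (fun x _ => hasDerivAt_xiNumerator x) (fun x _ => hasDerivAt_cos_sq x)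
    continuous_xiNumerator.continuousOn (by fun_prop)
    (fun x hx => by nlinarith [hsin x hx, hcos x hx]) xiNumerator_pi_div_two
    (by simp) hratio

lemma tendsto_xi_nhdsGT_neg_pi_div_two : Tendsto xi (𝓝[>] (-(π / 2))) (𝓝 0) :=
  (tendsto_xi_nhdsLT_pi_div_two.comp tendsto_neg_nhdsGT_neg).congr xi_neg

lemma continuousOn_xi_Ioo : ContinuousOn xi (Ioo (-(π / 2)) (π / 2)) := fun _ hx =>
  (continuous_xiNumerator.continuousAt.div (continuous_cos.pow 2).continuousAt
    (pow_ne_zero 2 (cos_pos_of_mem_Ioo hx).ne')).continuousWithinAt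

theorem xi_boundary_limits :
    Filter.Tendsto xi (nhdsWithin (Real.pi / 2) (Set.Iio (Real.pi / 2))) (nhds 0) ∧
    Filter.Tendsto xi (nhdsWithin (-(Real.pi / 2)) (Set.Ioi (-(Real.pi / 2)))) (nhds 0) ∧
    ContinuousOn
      (fun θ => if θ = Real.pi / 2 ∨ θ = -(Real.pi / 2) then 0 else xi θ)
      (Set.Icc (-(Real.pi / 2)) (Real.pi / 2)) := by
  have hleft : xi (-(π / 2)) = 0 := by rw [xi_neg, xi_pi_div_two]
  have hext : (fun θ => if θ = π / 2 ∨ θ = -(π / 2) then 0 else xi θ) = xi := by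
    ext θ
    split_ifs with h
    · rcases h with rfl | rfl
      exacts [xi_pi_div_two.symm, hleft.symm]
    · rfl
  refine ⟨tendsto_xi_nhdsLT_pi_div_two, tendsto_xi_nhdsGT_neg_pi_div_two, ?_⟩
  rw [hext]
  apply continuousOn_Icc_of_continuousOn_Ioo continuousOn_xi_Ioo
  · simpa only [hleft] using tendsto_xi_nhdsGT_neg_pi_div_two
  · simpa only [xi_pi_div_two] using tendsto_xi_nhdsLT_pi_div_two
end

section
/- Let δ be a nonnegative real number and define z(θ) = 1 + δ·ξ(θ). Then for every θ in (−π/2, π/2), z'(θ)·sinθ ≥ 0. -/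
/-!
Writing `s = sin θ`, `c = cos θ`, one finds
`ξ'(θ) · sin θ = 2 s² (θ² + 2θ c / s + c² − π²/4) / c³`,
so the claim reduces to `θ² + 2θ cot θ + cos² θ ≥ π²/4` on `0 < |θ| < π/2`. The left side is
even, and on `(0, π/2]` it is antitone, since its derivative `2 c² (s c − θ) / s²` is nonpositive
because `sin θ cos θ < θ`; its value at `π/2` is exactly `π²/4`.
-/

open Real Set Filter Topology

lemma hasDerivAt_sq_add_mul_cos_div_sin_add_cos_sq {x : ℝ} (hx : sin x ≠ 0) :
    HasDerivAt (fun t => t ^ 2 + 2 * t * cos t / sin t + cos t ^ 2)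
      (2 * cos x ^ 2 * (sin x * cos x - x) / sin x ^ 2) x := by
  have h : HasDerivAt (fun t => t ^ 2 + 2 * t * cos t / sin t + cos t ^ 2) _ x :=
    ((hasDerivAt_pow 2 x).add ((((hasDerivAt_id' x).const_mul 2).mul (hasDerivAt_cos x)).div
      (hasDerivAt_sin x) hx)).add ((hasDerivAt_cos x).pow 2)
  refine h.congr_deriv ?_
  simp only [Pi.mul_apply]
  field_simp
  linear_combination (-(2 * sin x * cos x)) * sin_sq_add_cos_sq x

lemma antitoneOn_sq_add_mul_cos_div_sin_add_cos_sq :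
    AntitoneOn (fun t => t ^ 2 + 2 * t * cos t / sin t + cos t ^ 2) (Ioc 0 (π / 2)) := by
  have hsin : ∀ x ∈ Ioc 0 (π / 2), 0 < sin x := fun x hx =>
    sin_pos_of_pos_of_lt_pi hx.1 (by linarith [hx.2, pi_pos])
  refine antitoneOn_of_deriv_nonpos (convex_Ioc _ _)
    (fun x hx => (hasDerivAt_sq_add_mul_cos_div_sin_add_cos_sq (hsin x hx).ne').continuousAt
      |>.continuousWithinAt) (fun x hx => ?_) (fun x hx => ?_)
  all_goals
    rw [interior_Ioc] at hx
    have hsx := hsin x (Ioo_subset_Ioc_self hx)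
  · exact (hasDerivAt_sq_add_mul_cos_div_sin_add_cos_sq hsx.ne').differentiableAt
      |>.differentiableWithinAt
  · rw [(hasDerivAt_sq_add_mul_cos_div_sin_add_cos_sq hsx.ne').deriv]
    have hsin_mul_cos : sin x * cos x < x :=
      calc sin x * cos x ≤ sin x := mul_le_of_le_one_right hsx.le (cos_le_one x)
        _ < x := sin_lt hx.1
    exact div_nonpos_of_nonpos_of_nonneg
      (mul_nonpos_of_nonneg_of_nonpos (by positivity) (by linarith)) (sq_nonneg _)

lemma pi_sq_div_four_mul_sin_sq_le_of_pos {θ : ℝ} (h₀ : 0 < θ) (hπ : θ ≤ π / 2) :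
    π ^ 2 / 4 * sin θ ^ 2 ≤ θ ^ 2 * sin θ ^ 2 + 2 * θ * cos θ * sin θ + cos θ ^ 2 * sin θ ^ 2 := by
  have hs : sin θ ≠ 0 := (sin_pos_of_pos_of_lt_pi h₀ (by linarith [pi_pos])).ne'
  have hle := antitoneOn_sq_add_mul_cos_div_sin_add_cos_sq ⟨h₀, hπ⟩ ⟨by positivity, le_rfl⟩ hπ
  calc π ^ 2 / 4 * sin θ ^ 2 = (π / 2) ^ 2 * sin θ ^ 2 := by ring
    _ ≤ (θ ^ 2 + 2 * θ * cos θ / sin θ + cos θ ^ 2) * sin θ ^ 2 := by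
        gcongr; simpa using hle
    _ = _ := by field_simp

lemma pi_sq_div_four_mul_sin_sq_le {θ : ℝ} (hθ : |θ| ≤ π / 2) :
    π ^ 2 / 4 * sin θ ^ 2 ≤ θ ^ 2 * sin θ ^ 2 + 2 * θ * cos θ * sin θ + cos θ ^ 2 * sin θ ^ 2 := by
  rcases lt_trichotomy θ 0 with hneg | rfl | hpos
  · have h := pi_sq_div_four_mul_sin_sq_le_of_pos (neg_pos.2 hneg)
      (by rwa [abs_of_neg hneg] at hθ)
    simp only [sin_neg, cos_neg] at h
    linarith
  · simp
  · exact pi_sq_div_four_mul_sin_sq_le_of_pos hpos (by rwa [abs_of_pos hpos] at hθ)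

lemma hasDerivAt_xi {θ : ℝ} (hc : cos θ ≠ 0) :
    HasDerivAt xi
      (2 * (cos θ ^ 2 * sin θ + 2 * θ * cos θ + (θ ^ 2 - π ^ 2 / 4) * sin θ) / cos θ ^ 3) θ := by
  have h : HasDerivAt xi _ θ :=
    (((((hasDerivAt_cos θ).pow 2).add ((((hasDerivAt_id' θ).const_mul 2).mul
      (hasDerivAt_sin θ)).mul (hasDerivAt_cos θ))).add (hasDerivAt_pow 2 θ)).sub_const
      (π ^ 2 / 4)).div ((hasDerivAt_cos θ).pow 2) (pow_ne_zero 2 hc)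
  refine h.congr_deriv ?_
  simp only [Pi.mul_apply, Pi.add_apply, Pi.pow_apply]
  field_simp
  linear_combination (8 * cos θ ^ 2 * θ) * sin_sq_add_cos_sq θ

theorem z_deriv_mul_sin_nonneg (δ : ℝ) (hδ : 0 ≤ δ) :
    ∀ θ ∈ Set.Ioo (-(Real.pi / 2)) (Real.pi / 2),
      0 ≤ deriv (fun t => 1 + δ * xi t) θ * Real.sin θ := by
  intro θ hθ
  have hc : 0 < cos θ := cos_pos_of_mem_Ioo hθ
  rw [((hasDerivAt_xi hc.ne').const_mul δ |>.const_add 1).deriv]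
  have hkey := pi_sq_div_four_mul_sin_sq_le (abs_le.2 ⟨hθ.1.le, hθ.2.le⟩)
  have hnum :
      0 ≤ sin θ * (cos θ ^ 2 * sin θ + 2 * θ * cos θ + (θ ^ 2 - π ^ 2 / 4) * sin θ) := by
    linarith
  calc (0 : ℝ)
      ≤ 2 * δ * (sin θ * (cos θ ^ 2 * sin θ + 2 * θ * cos θ + (θ ^ 2 - π ^ 2 / 4) * sin θ))
          / cos θ ^ 3 := by positivity
    _ = _ := by ring
end

section
/- For every real number δ, ∫_{−π/2}^{π/2} (1 + δ·ξ(θ)) dθ = π·(1 − δ). -/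
open Real Set Filter Topology

/-!
On `(-π/2, π/2)`, `ξ` is the derivative of `θ + (θ² - π²/4) tan θ`. Since
`cos θ = 2 sin((π/2 - θ)/2) sin((π/2 + θ)/2)`, the zeros of `cos` cancel against those of
`θ² - π²/4`, and this primitive extends continuously to `[-π/2, π/2]` with values `∓π/2` at `±π/2`;
hence `∫ ξ = -π`. The fundamental theorem of calculus needs `ξ` integrable, which follows from its
sign: `cos²θ · ξ(θ)` is even, has derivative `4θ cos²θ`, and vanishes at `π/2`, so `ξ ≤ 0`.
-/

lemma Real.sinc_pos {x : ℝ} (hx : |x| < π) : 0 < sinc x := by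
  wlog hx₀ : 0 ≤ x generalizing x
  · simpa using this (x := -x) (by rwa [abs_neg]) (by linarith)
  rcases hx₀.eq_or_lt with rfl | hx₀
  · simp
  rw [sinc_of_ne_zero hx₀.ne']
  exact div_pos (sin_pos_of_pos_of_lt_pi hx₀ (abs_lt.mp hx).2) hx₀

lemma Real.cos_eq_two_mul_sin_mul_sin (θ : ℝ) :
    cos θ = 2 * sin ((π / 2 - θ) / 2) * sin ((π / 2 + θ) / 2) := by
  have h := cos_sub_cos θ (π / 2)
  rw [cos_pi_div_two, sub_zero] at h
  rw [h, show (θ - π / 2) / 2 = -((π / 2 - θ) / 2) by ring, sin_neg,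
    show (θ + π / 2) / 2 = (π / 2 + θ) / 2 by ring]
  ring

/-- `θ + (θ² - π²/4) tan θ`, written so that it is continuous on `[-π/2, π/2]`. -/
noncomputable def xiPrimitive (θ : ℝ) : ℝ :=
  θ - 2 * sin θ / (sinc ((π / 2 - θ) / 2) * sinc ((π / 2 + θ) / 2))

lemma xiPrimitive_eq {θ : ℝ} (hθ : cos θ ≠ 0) :
    xiPrimitive θ = θ + (θ ^ 2 - π ^ 2 / 4) * tan θ := by
  have ha : (π / 2 - θ) / 2 ≠ 0 := fun h => hθ (by
    rw [show θ = π / 2 by linarith, cos_pi_div_two])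
  have hb : (π / 2 + θ) / 2 ≠ 0 := fun h => hθ (by
    rw [show θ = -(π / 2) by linarith, cos_neg, cos_pi_div_two])
  have hcos := cos_eq_two_mul_sin_mul_sin θ
  rw [xiPrimitive, sinc_of_ne_zero ha, sinc_of_ne_zero hb, tan_eq_sin_div_cos, hcos]
  rw [hcos] at hθ
  field_simp
  ring

lemma continuousOn_xiPrimitive : ContinuousOn xiPrimitive (Icc (-(π / 2)) (π / 2)) := by
  have hsinc {x : ℝ} (hx : |x| ≤ π / 2) : sinc x ≠ 0 :=
    (sinc_pos (hx.trans_lt (by linarith [pi_pos]))).ne'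
  refine continuous_id.continuousOn.sub (ContinuousOn.div (by fun_prop) (by fun_prop) ?_)
  rintro θ ⟨hθ₁, hθ₂⟩
  exact mul_ne_zero (hsinc (abs_le.mpr ⟨by linarith, by linarith⟩))
    (hsinc (abs_le.mpr ⟨by linarith, by linarith⟩))

lemma Real.sinc_pi_div_two : sinc (π / 2) = 2 / π := by
  rw [sinc_of_ne_zero pi_div_two_pos.ne', sin_pi_div_two, one_div_div]

lemma xiPrimitive_pi_div_two : xiPrimitive (π / 2) = -(π / 2) := by
  simp only [xiPrimitive, sub_self, zero_div, sinc_zero, sin_pi_div_two, add_halves,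
    sinc_pi_div_two]
  field_simp
  ring

lemma xiPrimitive_neg_pi_div_two : xiPrimitive (-(π / 2)) = π / 2 := by
  simp only [xiPrimitive, sin_neg, sin_pi_div_two, sub_neg_eq_add, add_halves, add_neg_cancel,
    zero_div, sinc_zero, sinc_pi_div_two]
  field_simp
  ring

lemma hasDerivAt_xiPrimitive {θ : ℝ} (hθ : cos θ ≠ 0) : HasDerivAt xiPrimitive (xi θ) θ := by
  have h : HasDerivAt (fun t => t + (t ^ 2 - π ^ 2 / 4) * tan t)
      (1 + ((2 : ℕ) * θ ^ 1 * tan θ + (θ ^ 2 - π ^ 2 / 4) * (1 / cos θ ^ 2))) θ :=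
    (hasDerivAt_id θ).add (((hasDerivAt_pow 2 θ).sub_const _).mul (hasDerivAt_tan hθ))
  refine (h.congr_of_eventuallyEq ?_).congr_deriv ?_
  · filter_upwards [continuous_cos.continuousAt.eventually_ne hθ] with t ht
    exact xiPrimitive_eq ht
  · unfold xi
    rw [tan_eq_sin_div_cos]
    push_cast
    field_simp
    ring

lemma xi_numerator_nonpos {θ : ℝ} (hθ : |θ| ≤ π / 2) :
    cos θ ^ 2 + 2 * θ * sin θ * cos θ + θ ^ 2 - π ^ 2 / 4 ≤ 0 := by
  set N : ℝ → ℝ := fun t => cos t ^ 2 + 2 * t * sin t * cos t + t ^ 2 - π ^ 2 / 4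
  have hN : ∀ t, HasDerivAt N (4 * t * cos t ^ 2) t := by
    intro t
    refine (((((hasDerivAt_cos t).pow 2).add ((((hasDerivAt_id t).const_mul 2).mul
      (hasDerivAt_sin t)).mul (hasDerivAt_cos t))).add (hasDerivAt_pow 2 t)).sub_const
      (π ^ 2 / 4)).congr_deriv ?_
    simp only [id, Pi.mul_apply]
    push_cast
    linear_combination (-2 * t) * sin_sq_add_cos_sq t
  have hmono : MonotoneOn N (Ici 0) := by
    refine monotoneOn_of_hasDerivWithinAt_nonneg (convex_Ici 0)
      (fun t _ => (hN t).continuousAt.continuousWithinAt) (fun t _ => (hN t).hasDerivWithinAt)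
      fun t ht => ?_
    rw [interior_Ici] at ht
    have : 0 < t := ht
    positivity
  have heven : N |θ| = N θ := by
    rcases abs_choice θ with h | h
    · rw [h]
    · rw [h]
      simp only [N, cos_neg, sin_neg]
      ring
  calc N θ = N |θ| := heven.symm
    _ ≤ N (π / 2) := hmono (abs_nonneg θ) pi_div_two_pos.le hθ
    _ = 0 := by simp only [N, cos_pi_div_two]; ring

lemma xi_nonpos {θ : ℝ} (hθ : θ ∈ Ioo (-(π / 2)) (π / 2)) : xi θ ≤ 0 :=
  div_nonpos_of_nonpos_of_nonneg (xi_numerator_nonpos (abs_le.mpr ⟨hθ.1.le, hθ.2.le⟩))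
    (sq_nonneg _)

lemma intervalIntegrable_xi : IntervalIntegrable xi MeasureTheory.volume (-(π / 2)) (π / 2) := by
  have h := intervalIntegral.integrableOn_deriv_of_nonneg (g := -xiPrimitive) (g' := -xi)
    continuousOn_xiPrimitive.neg
    (fun θ hθ => (hasDerivAt_xiPrimitive (cos_pos_of_mem_Ioo hθ).ne').neg)
    fun θ hθ => neg_nonneg.mpr (xi_nonpos hθ)
  rw [intervalIntegrable_iff_integrableOn_Ioc_of_le (by linarith [pi_pos])]
  simpa only [neg_neg] using h.neg

lemma integral_xi : ∫ θ in (-(π / 2))..(π / 2), xi θ = -π := by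
  rw [intervalIntegral.integral_eq_sub_of_hasDerivAt_of_le (by linarith [pi_pos])
    continuousOn_xiPrimitive (fun θ hθ => hasDerivAt_xiPrimitive (cos_pos_of_mem_Ioo hθ).ne')
    intervalIntegrable_xi, xiPrimitive_pi_div_two, xiPrimitive_neg_pi_div_two]
  ring

theorem z_integral_full (δ : ℝ) :
    ∫ θ in (-(Real.pi / 2))..(Real.pi / 2), (1 + δ * xi θ) = Real.pi * (1 - δ) := by
  rw [intervalIntegral.integral_add intervalIntegrable_const (intervalIntegrable_xi.const_mul δ),
    intervalIntegral.integral_const_mul, integral_xi, intervalIntegral.integral_const]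
  simp only [smul_eq_mul]
  ring
end
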